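/- arXiv:1902.10163 — 2 statements merged into one kernel-verified Lean document; each statement's English description precedes it below -/
import Mathlib

section
/- In the Ewens model, the difference ΔW(N,k) = W(N,k+1) − W(N,k) satisfies ΔW(N,k) = (N−1)·ΔW(N−1,k) + θ²·((N−2)!/k!)·[θ(θ+1)···(θ+k−1)], with initial condition ΔW(N,N−2) = θ(θ−(N−1))·θ(θ+1)···(θ+N−3). -/
/-- Number of left-to-right maxima of the permutation `π` (one-line notation
`i ↦ π i`): positions `j` such that `π i < π j` for all `i < j`. -/
def lrmaxCount {N : ℕ} (π : Equiv.Perm (Fin N)) : ℕ :=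
  (Finset.univ.filter (fun j : Fin N => ∀ i, i < j → π i < π j)).card

/-- Number of inversions of `π`: pairs of positions `i < j` with `π i > π j`. -/
def invCount {N : ℕ} (π : Equiv.Perm (Fin N)) : ℕ :=
  (Finset.univ.filter (fun p : Fin N × Fin N => p.1 < p.2 ∧ π p.2 < π p.1)).card

/-- Position `j` is a left-to-right maximum of `π`. -/
def IsLRMax {N : ℕ} (π : Equiv.Perm (Fin N)) (j : Fin N) : Prop :=
  ∀ i, i < j → π i < π j

/-- `π` is `k`-winnable: the positional strategy that rejects the first `k`
candidates (positions `0,…,k-1`) and accepts the next left-to-right maximum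
thereafter selects the position of the maximal value. -/
def KWinnable {N : ℕ} (k : ℕ) (π : Equiv.Perm (Fin N)) : Prop :=
  ∃ j : Fin N, k ≤ (j : ℕ) ∧ IsLRMax π j ∧ (∀ i, π i ≤ π j) ∧
    ∀ i : Fin N, k ≤ (i : ℕ) → i < j → ¬ IsLRMax π i

open Classical in
/-- Ewens-weighted count of `k`-winnable permutations:
`W(N,k) = Σ_{k-winnable π ∈ S_N} θ^{lrmax(π)}`. -/
noncomputable def W (R : Type*) [CommRing R] (N k : ℕ) (θ : R) : R :=
  ∑ π ∈ Finset.univ.filter (fun π : Equiv.Perm (Fin N) => KWinnable k π),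
    θ ^ lrmaxCount π

/-!
Call a left-to-right maximum at a position `≥ k` a record from `k`. A permutation is
`k`-winnable exactly when it has a single record from `k`: no record follows the position of
the maximal value, that position is a record from `k` when it is `≥ k`, and the strategy wins
iff it is the first one.

Every `π ∈ S_{n+1}` arises uniquely from some `σ ∈ S_n` by appending a last value `v` and
shifting the values `≥ v` of `σ` up by one. This keeps the left-to-right maxima of `σ` and makes
the last position one iff `v` is the largest value. So the `θ^{lrmax}`-weighted count `R(N, k, c)`
of permutations with `c` records from `k` satisfies, for `k ≤ n`,
`R(n+1, k, c+1) = n R(n, k, c+1) + θ R(n, k, c)` and `R(N, k, 0) = θ^{(k)} k (k+1) ⋯ (N-1)`.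
With `W(N, k) = R(N, k, 1)` this gives `W(n+1, k) = n W(n, k) + θ R(n, k, 0)`, and the
recurrence for `ΔW` is the difference of this identity at `k + 1` and at `k`.
-/

open Finset

section Records

variable {n : ℕ}

instance (π : Equiv.Perm (Fin n)) : DecidablePred (IsLRMax π) :=
  fun j => inferInstanceAs (Decidable (∀ i, i < j → π i < π j))

def numRecordsFrom (k : ℕ) (π : Equiv.Perm (Fin n)) : ℕ :=
  #{i : Fin n | k ≤ (i : ℕ) ∧ IsLRMax π i}

lemma lrmaxCount_eq_numRecordsFrom_zero (π : Equiv.Perm (Fin n)) :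
    lrmaxCount π = numRecordsFrom 0 π := by
  simp [lrmaxCount, numRecordsFrom, IsLRMax]

lemma kWinnable_iff_numRecordsFrom_eq_one (k : ℕ) (π : Equiv.Perm (Fin n)) :
    KWinnable k π ↔ numRecordsFrom k π = 1 := by
  rw [numRecordsFrom, card_eq_one]
  constructor
  · rintro ⟨j, hkj, hj, hmax, hfirst⟩
    refine ⟨j, eq_singleton_iff_unique_mem.2 ⟨by simp [hkj, hj], fun i hi => ?_⟩⟩
    obtain ⟨hki, hi⟩ := (mem_filter.1 hi).2
    rcases lt_trichotomy i j with hij | rfl | hji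
    · exact absurd hi (hfirst i hki hij)
    · rfl
    · exact absurd (hi j hji) (not_lt.2 (hmax i))
  · rintro ⟨j, hrec⟩
    have mem_iff : ∀ i : Fin n, k ≤ (i : ℕ) ∧ IsLRMax π i ↔ i = j := fun i => by
      simpa using congrArg (i ∈ ·) hrec
    obtain ⟨hkj, hj⟩ := (mem_iff j).2 rfl
    have : Nonempty (Fin n) := ⟨j⟩
    obtain ⟨m, hm⟩ := Finite.exists_max π
    have hm_rec : IsLRMax π m := fun i hi => (hm i).lt_of_ne (π.injective.ne hi.ne)
    have hkm : k ≤ (m : ℕ) := by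
      by_contra! h
      exact absurd (hj m (Fin.lt_def.2 (by omega))) (not_lt.2 (hm j))
    obtain rfl := (mem_iff m).1 ⟨hkm, hm_rec⟩
    exact ⟨m, hkm, hm_rec, hm, fun i hki him hi => him.ne ((mem_iff i).1 ⟨hki, hi⟩)⟩

end Records

section Insertion

variable {n : ℕ}

noncomputable def snocPerm (σ : Equiv.Perm (Fin n)) (v : Fin (n + 1)) : Equiv.Perm (Fin (n + 1)) :=
  Equiv.ofBijective (Fin.snoc (α := fun _ => Fin (n + 1)) (v.succAbove ∘ σ) v)
    (Finite.injective_iff_bijective.1 <| Fin.snoc_injective_of_injective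
      (Fin.succAbove_right_injective.comp σ.injective) (by simp))

@[simp] lemma snocPerm_castSucc (σ : Equiv.Perm (Fin n)) (v : Fin (n + 1)) (j : Fin n) :
    snocPerm σ v j.castSucc = v.succAbove (σ j) := by
  simp [snocPerm]

@[simp] lemma snocPerm_last (σ : Equiv.Perm (Fin n)) (v : Fin (n + 1)) :
    snocPerm σ v (Fin.last n) = v := by
  simp [snocPerm]

lemma snocPerm_bijective :
    Function.Bijective (fun p : Equiv.Perm (Fin n) × Fin (n + 1) => snocPerm p.1 p.2) := by
  rw [Fintype.bijective_iff_injective_and_card]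
  refine ⟨fun ⟨σ, v⟩ ⟨τ, w⟩ h => ?_, by simp [Fintype.card_perm, Nat.factorial_succ, mul_comm]⟩
  have hv : v = w := by simpa using congrArg (· (Fin.last n)) h
  subst hv
  refine Prod.ext (Equiv.ext fun j => ?_) rfl
  simpa using congrArg (· j.castSucc) h

lemma sum_perm_succ {M : Type*} [AddCommMonoid M] (f : Equiv.Perm (Fin (n + 1)) → M) :
    ∑ π, f π = ∑ σ : Equiv.Perm (Fin n), ∑ v, f (snocPerm σ v) := by
  rw [← Fintype.sum_prod_type', Fintype.sum_bijective _ snocPerm_bijective _ f fun _ => rfl]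

lemma isLRMax_snocPerm_castSucc (σ : Equiv.Perm (Fin n)) (v : Fin (n + 1)) (j : Fin n) :
    IsLRMax (snocPerm σ v) j.castSucc ↔ IsLRMax σ j := by
  refine ⟨fun h i hij => ?_, fun h i hij => ?_⟩
  · simpa using h i.castSucc (by simpa using hij)
  · induction i using Fin.lastCases with
    | last => exact absurd hij (not_lt.2 (Fin.castSucc_lt_last j).le)
    | cast i => simpa using h i (by simpa using hij)

lemma isLRMax_snocPerm_last (σ : Equiv.Perm (Fin n)) (v : Fin (n + 1)) :
    IsLRMax (snocPerm σ v) (Fin.last n) ↔ v = Fin.last n := by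
  refine ⟨fun h => ?_, fun hv i hi => ?_⟩
  · by_contra hv
    obtain ⟨u, hu⟩ := Fin.exists_succAbove_eq (Ne.symm hv)
    have := h (σ.symm u).castSucc (Fin.castSucc_lt_last _)
    simp only [snocPerm_castSucc, snocPerm_last, Equiv.apply_symm_apply, hu] at this
    exact absurd (this.trans_le (Fin.le_last v)) (lt_irrefl _)
  · induction i using Fin.lastCases with
    | last => exact absurd hi (lt_irrefl _)
    | cast i => simp [hv, Fin.castSucc_lt_last]

lemma numRecordsFrom_snocPerm (k : ℕ) (σ : Equiv.Perm (Fin n)) (v : Fin (n + 1)) :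
    numRecordsFrom k (snocPerm σ v) =
      numRecordsFrom k σ + if k ≤ n ∧ v = Fin.last n then 1 else 0 := by
  simp only [numRecordsFrom, card_filter, Fin.sum_univ_castSucc, isLRMax_snocPerm_castSucc,
    isLRMax_snocPerm_last, Fin.val_castSucc, Fin.val_last]

end Insertion

section RecordSum

variable {R : Type*} [CommSemiring R] (θ : R)

def recordSum (N k c : ℕ) : R :=
  ∑ π : Equiv.Perm (Fin N) with numRecordsFrom k π = c, θ ^ lrmaxCount π

lemma recordSum_succ (n k c : ℕ) :
    recordSum θ (n + 1) k c = n * recordSum θ n k c +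
      θ * ∑ σ : Equiv.Perm (Fin n) with numRecordsFrom k σ + (if k ≤ n then 1 else 0) = c,
        θ ^ lrmaxCount σ := by
  simp only [recordSum, sum_filter, sum_perm_succ, lrmaxCount_eq_numRecordsFrom_zero,
    numRecordsFrom_snocPerm, Fin.sum_univ_castSucc, (Fin.castSucc_lt_last _).ne, and_false,
    and_true, zero_le, true_and, if_false, if_true, add_zero]
  simp only [sum_const, card_univ, Fintype.card_fin, nsmul_eq_mul, sum_add_distrib, mul_sum,
    pow_succ, mul_ite, mul_zero]
  ac_rfl

lemma recordSum_succ_of_lt {n k : ℕ} (h : n < k) (c : ℕ) :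
    recordSum θ (n + 1) k c = (n + θ) * recordSum θ n k c := by
  rw [recordSum_succ, if_neg h.not_ge, add_mul]
  simp only [add_zero, recordSum]

lemma recordSum_succ_zero {n k : ℕ} (h : k ≤ n) :
    recordSum θ (n + 1) k 0 = n * recordSum θ n k 0 := by
  simp [recordSum_succ, h]

lemma recordSum_succ_succ {n k : ℕ} (h : k ≤ n) (c : ℕ) :
    recordSum θ (n + 1) k (c + 1) = n * recordSum θ n k (c + 1) + θ * recordSum θ n k c := by
  rw [recordSum_succ, if_pos h]
  simp only [Nat.add_right_cancel_iff, recordSum]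

lemma recordSum_zero_eq_prod (N k : ℕ) :
    recordSum θ N k 0 = ∏ j ∈ range N, if j < k then θ + j else (j : R) := by
  induction N with
  | zero => simp [recordSum, numRecordsFrom, lrmaxCount]
  | succ n ih =>
    rw [prod_range_succ, ← ih]
    by_cases h : n < k
    · rw [recordSum_succ_of_lt θ h, if_pos h, add_comm, mul_comm]
    · rw [recordSum_succ_zero θ (not_lt.1 h), if_neg h, mul_comm]

lemma recordSum_zero_of_le {N k : ℕ} (h : k ≤ N) :
    recordSum θ N k 0 = (∏ j ∈ range k, (θ + j)) * ∏ j ∈ Ico k N, (j : R) := by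
  rw [recordSum_zero_eq_prod, ← prod_range_mul_prod_Ico _ h]
  congr 1
  · exact prod_congr rfl fun j hj => if_pos (mem_range.1 hj)
  · exact prod_congr rfl fun j hj => if_neg (mem_Ico.1 hj).1.not_gt

end RecordSum

section Winnable

variable {R : Type*} [CommRing R] (θ : R)

lemma W_eq_recordSum_one (N k : ℕ) : W R N k θ = recordSum θ N k 1 := by
  simp only [W, recordSum, kWinnable_iff_numRecordsFrom_eq_one]

lemma W_self (N : ℕ) : W R N N θ = 0 := by
  classical
  refine sum_eq_zero fun π hπ => ?_
  obtain ⟨j, hj, -⟩ := (mem_filter.1 hπ).2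
  exact absurd j.is_lt hj.not_gt

lemma W_succ {n k : ℕ} (h : k ≤ n) :
    W R (n + 1) k θ = n * W R n k θ + θ * recordSum θ n k 0 := by
  simp only [W_eq_recordSum_one, recordSum_succ_succ θ h]

lemma deltaW_succ {n k : ℕ} (h : k < n) :
    W R (n + 1) (k + 1) θ - W R (n + 1) k θ =
      n * (W R n (k + 1) θ - W R n k θ) +
        θ ^ 2 * (∏ j ∈ range k, (θ + j)) * ∏ j ∈ Ico (k + 1) n, (j : R) := by
  rw [W_succ θ h, W_succ θ h.le, recordSum_zero_of_le θ h, recordSum_zero_of_le θ h.le,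
    prod_range_succ, prod_eq_prod_Ico_succ_bot h]
  ring

lemma deltaW_top (l : ℕ) :
    W R (l + 2) (l + 1) θ - W R (l + 2) l θ =
      θ * (θ - (l + 1)) * ∏ j ∈ range l, (θ + j) := by
  rw [W_succ θ le_rfl, W_succ θ (Nat.le_succ l), W_self, W_succ θ le_rfl, W_self,
    recordSum_zero_of_le θ le_rfl, recordSum_zero_of_le θ (Nat.le_succ l),
    recordSum_zero_of_le θ le_rfl]
  simp only [Ico_self, prod_empty, Nat.Ico_succ_singleton, prod_singleton, prod_range_succ,
    Nat.cast_succ]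
  ring

end Winnable

lemma prod_Ico_succ_cast_eq_factorial_div {K : Type*} [Field K] [CharZero K] {k m : ℕ}
    (h : k ≤ m) : ∏ i ∈ Ico (k + 1) (m + 1), (i : K) = m.factorial / k.factorial := by
  have hnat : k.factorial * ∏ i ∈ Ico (k + 1) (m + 1), i = m.factorial := by
    rw [← prod_Ico_id_eq_factorial, ← prod_Ico_id_eq_factorial,
      prod_Ico_consecutive _ (Nat.le_add_left 1 k) (by omega)]
  rw [eq_div_iff (Nat.cast_ne_zero.2 k.factorial_ne_zero), mul_comm]
  simpa using congrArg (Nat.cast : ℕ → K) hnat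

/-- recurrence for `ΔW(N,k) = W(N,k+1) − W(N,k)` in the Ewens model:
`ΔW(N,k) = (N−1)·ΔW(N−1,k) + θ²·((N−2)!/k!)·θ(θ+1)⋯(θ+k−1)`,
with initial condition `ΔW(N,N−2) = θ(θ−(N−1))·θ(θ+1)⋯(θ+N−3)`. -/
theorem ewens_deltaW_recurrence :
    (∀ N k : ℕ, ∀ θ : ℝ, k + 2 < N →
      W ℝ N (k + 1) θ - W ℝ N k θ =
        ((N : ℝ) - 1) * (W ℝ (N - 1) (k + 1) θ - W ℝ (N - 1) k θ) +
          θ ^ 2 * ((Nat.factorial (N - 2) : ℝ) / (Nat.factorial k : ℝ)) *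
            ∏ j ∈ Finset.range k, (θ + j)) ∧
    (∀ N : ℕ, ∀ θ : ℝ, 2 ≤ N →
      W ℝ N (N - 1) θ - W ℝ N (N - 2) θ =
        θ * (θ - ((N : ℝ) - 1)) * ∏ j ∈ Finset.range (N - 2), (θ + j)) := by
  refine ⟨fun N k θ h => ?_, fun N θ h => ?_⟩
  · obtain ⟨m, rfl⟩ : ∃ m, N = m + 2 := ⟨N - 2, by omega⟩
    rw [show m + 2 - 1 = m + 1 from rfl, show m + 2 - 2 = m from rfl, deltaW_succ θ (by omega),
      prod_Ico_succ_cast_eq_factorial_div (by omega)]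
    push_cast
    ring
  · obtain ⟨l, rfl⟩ : ∃ l, N = l + 2 := ⟨N - 2, by omega⟩
    rw [show l + 2 - 1 = l + 1 from rfl, show l + 2 - 2 = l from rfl, deltaW_top]
    push_cast
    ring
end

section
/- For the Mallows-weighted game of best choice, the weighted count W(N,k) of k-winnable permutations (weighting by θ^{inv}) satisfies W(N,k) = θ·[N−1]_θ·W(N−1,k) + θ^{N−k−1}·[k]_θ·[N−2]_θ!, for 1 ≤ k < N, with W(1,0) = 1 and W(N,N) = 0. -/
/-- θ-analogue `[n]_θ = 1 + θ + ⋯ + θ^{n-1}`. -/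
def tA (n : ℕ) (θ : ℝ) : ℝ := ∑ m ∈ Finset.range n, θ ^ m

/-- θ-factorial `[m]_θ! = [m]_θ [m-1]_θ ⋯ [1]_θ`. -/
def qfact (m : ℕ) (θ : ℝ) : ℝ := ∏ n ∈ Finset.range m, tA (n + 1) θ

open Classical in
/-- Mallows-weighted count of `k`-winnable permutations:
`W(N,k) = Σ_{k-winnable π ∈ S_N} θ^{inv(π)}`. -/
noncomputable def WM (N k : ℕ) (θ : ℝ) : ℝ :=
  ∑ π ∈ Finset.univ.filter (fun π : Equiv.Perm (Fin N) => KWinnable k π),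
    θ ^ invCount π

/-!
Inserting the smallest value at position `a` into `τ ∈ S_{N-1}` adds `a` inversions, and the
result is `k`-winnable iff `τ` is `k`-winnable (if `a ≥ k`) or `(k-1)`-winnable (if `a < k`);
hence `W(N,k) = θ^k [N-k]_θ W(N-1,k) + [k]_θ W(N-1,k-1)`. The thresholds `k - 1` and `k` give
different verdicts on `τ` only when position `k - 1` is a left-to-right maximum of `τ`, so
`W(N-1,k-1) = W(N-1,k) - S + θ^{N-k-1} [N-2]_θ!`, where `S` counts the `k`-winnable `τ` with a
left-to-right maximum at `k - 1` and the last term those with their maximum there. Rotating the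
largest of the first `k` entries to position `k - 1` preserves `k`-winnability and removes one
inversion per position moved, so `W(N-1,k) = [k]_θ S`.
-/

open Equiv Finset

lemma perm_apply_iff_of_fixed {α : Type*} {c : Perm α} {P : α → Prop}
    (hc : ∀ i, P i → c i = i) (i : α) : P (c i) ↔ P i := by
  refine ⟨fun h => ?_, fun h => by rwa [hc i h]⟩
  rwa [c.injective (hc _ h)] at h

lemma sum_pow_eq_tA (n : ℕ) (θ : ℝ) : ∑ a : Fin n, θ ^ (a : ℕ) = tA n θ :=
  Fin.sum_univ_eq_sum_range (θ ^ ·) n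

lemma sum_ite_le_pow_eq_tA {n k : ℕ} (hk : k < n) (θ : ℝ) :
    ∑ a : Fin n, (if (a : ℕ) ≤ k then θ ^ (a : ℕ) else 0) = tA (k + 1) θ := by
  rw [Fin.sum_univ_eq_sum_range (fun i => if i ≤ k then θ ^ i else 0) n, ← sum_filter, tA]
  congr 1
  ext i
  simp only [mem_filter, mem_range]
  omega

lemma sum_Iic_pow_sub_eq_tA {n : ℕ} (p : Fin n) (θ : ℝ) :
    ∑ q ∈ Iic p, θ ^ (p - q : ℕ) = tA (p + 1) θ := by
  calc ∑ q ∈ Iic p, θ ^ (p - q : ℕ) = ∑ j ∈ Iic (p : ℕ), θ ^ (p - j) := by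
        rw [← Fin.map_valEmbedding_Iic, sum_map]
        rfl
    _ = tA (p + 1) θ := by
      rw [← Nat.range_succ_eq_Iic, tA, ← sum_range_reflect (θ ^ ·) (p + 1)]
      simp

section Insert

variable {M : ℕ}

def insertPerm (a b : Fin (M + 1)) (τ : Perm (Fin M)) : Perm (Fin (M + 1)) :=
  ((finSuccEquiv' a).trans τ.optionCongr).trans (finSuccEquiv' b).symm

@[simp]
lemma insertPerm_apply_self (a b : Fin (M + 1)) (τ : Perm (Fin M)) : insertPerm a b τ a = b := by
  simp [insertPerm]

@[simp]
lemma insertPerm_apply_succAbove (a b : Fin (M + 1)) (τ : Perm (Fin M)) (i : Fin M) :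
    insertPerm a b τ (a.succAbove i) = b.succAbove (τ i) := by
  simp [insertPerm]

lemma insertPerm_bijective (b : Fin (M + 1)) :
    Function.Bijective fun x : Fin (M + 1) × Perm (Fin M) => insertPerm x.1 b x.2 := by
  refine (Fintype.bijective_iff_injective_and_card _).mpr ⟨?_, ?_⟩
  · rintro ⟨a, τ⟩ ⟨a', τ'⟩ h
    dsimp only at h
    obtain rfl : a = a' := by
      have hb := insertPerm_apply_self a b τ
      rw [h] at hb
      exact (insertPerm a' b τ').injective (hb.trans (insertPerm_apply_self a' b τ').symm)
    refine Prod.ext rfl (Equiv.ext fun i => Fin.succAbove_right_injective (p := b) ?_)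
    rw [← insertPerm_apply_succAbove, h, insertPerm_apply_succAbove]
  · simp [Fintype.card_perm, Nat.factorial_succ]

lemma sum_perm_eq_sum_insertPerm {β : Type*} [AddCommMonoid β] (b : Fin (M + 1))
    (f : Perm (Fin (M + 1)) → β) :
    ∑ σ, f σ = ∑ a, ∑ τ, f (insertPerm a b τ) := by
  rw [← Fintype.sum_prod_type']
  exact (Fintype.sum_bijective _ (insertPerm_bijective b) _ _ fun _ => rfl).symm

lemma insertPerm_mul_cycleIcc {q p : Fin (M + 1)} (hqp : q ≤ p) (b : Fin (M + 1))
    (τ : Perm (Fin M)) : insertPerm q b τ * Fin.cycleIcc q p = insertPerm p b τ := by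
  ext x
  rcases Fin.eq_self_or_eq_succAbove p x with rfl | ⟨i, rfl⟩
  · simp [Fin.cycleIcc_of_last hqp]
  · rw [Perm.mul_apply, ← Function.comp_apply (f := Fin.cycleIcc q p),
      Fin.cycleIcc_comp_succAbove q p hqp]
    simp

end Insert

section Inversions

variable {M : ℕ}

lemma invCount_eq_sum {n : ℕ} (σ : Perm (Fin n)) :
    invCount σ = ∑ x, ∑ y, if x < y ∧ σ y < σ x then 1 else 0 := by
  rw [invCount, card_filter, Fintype.sum_prod_type]

lemma invCount_insertPerm (a b : Fin (M + 1)) (τ : Perm (Fin M)) :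
    invCount (insertPerm a b τ) = invCount τ + #{x | x < a ∧ b < insertPerm a b τ x} +
      #{y | a < y ∧ insertPerm a b τ y < b} := by
  simp only [invCount_eq_sum, card_filter]
  simp_rw [Fin.sum_univ_succAbove _ a]
  simp only [lt_self_iff_false, false_and, if_false, insertPerm_apply_self,
    insertPerm_apply_succAbove, Fin.succAbove_lt_succAbove_iff, zero_add, sum_add_distrib]
  ring

lemma invCount_insertPerm_zero (a : Fin (M + 1)) (τ : Perm (Fin M)) :
    invCount (insertPerm a 0 τ) = invCount τ + a := by
  have hbefore : ({x | x < a ∧ 0 < insertPerm a 0 τ x} : Finset _) = Iio a := by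
    ext x
    simp only [mem_filter, mem_univ, true_and, mem_Iio, and_iff_left_iff_imp, Fin.pos_iff_ne_zero]
    intro hx h0
    exact hx.ne ((insertPerm a 0 τ).injective (h0.trans (insertPerm_apply_self a 0 τ).symm))
  simp [invCount_insertPerm, hbefore]

lemma invCount_insertPerm_last (a : Fin (M + 1)) (τ : Perm (Fin M)) :
    invCount (insertPerm a (Fin.last M) τ) = invCount τ + (M - a) := by
  have hafter :
      ({y | a < y ∧ insertPerm a (Fin.last M) τ y < Fin.last M} : Finset _) = Ioi a := by
    ext y
    simp only [mem_filter, mem_univ, true_and, mem_Ioi, and_iff_left_iff_imp,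
      Fin.lt_last_iff_ne_last]
    intro hy hlast
    exact hy.ne' ((insertPerm a _ τ).injective (hlast.trans (insertPerm_apply_self a _ τ).symm))
  simp [invCount_insertPerm, hafter, Fin.le_last]

lemma invCount_insertPerm_of_le {q p : Fin (M + 1)} (hqp : q ≤ p) (b : Fin (M + 1))
    (τ : Perm (Fin M)) (hmax : ∀ i ≤ p, insertPerm q b τ i ≤ b) :
    invCount (insertPerm q b τ) = invCount (insertPerm p b τ) + (p - q) := by
  set σ := insertPerm q b τ
  have hρ : insertPerm p b τ = σ * Fin.cycleIcc q p := (insertPerm_mul_cycleIcc hqp b τ).symm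
  have hlt : ∀ i ≤ p, i ≠ q → σ i < b := fun i hi hiq =>
    (hmax i hi).lt_of_ne fun h => hiq (σ.injective (h.trans (insertPerm_apply_self q b τ).symm))
  have hc_gt : ∀ i, p < i → Fin.cycleIcc q p i = i := fun i => Fin.cycleIcc_of_gt
  have hc_le : ∀ i ≤ p, Fin.cycleIcc q p i ≤ p := fun i =>
    not_lt.mp ∘ mt (perm_apply_iff_of_fixed hc_gt i).mp ∘ not_lt.mpr
  have hbefore_σ : ({x | x < q ∧ b < σ x} : Finset _) = ∅ :=
    filter_false_of_mem fun x _ ⟨hx, hb⟩ => (hmax x (hx.le.trans hqp)).not_gt hb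
  have hbefore_ρ : ({x | x < p ∧ b < insertPerm p b τ x} : Finset _) = ∅ :=
    filter_false_of_mem fun x _ ⟨hx, hb⟩ => (hmax _ (hc_le x hx.le)).not_gt (by rwa [hρ] at hb)
  set after_p : Finset (Fin (M + 1)) := {y | p < y ∧ σ y < b}
  have hafter_ρ : ({y | p < y ∧ insertPerm p b τ y < b} : Finset _) = after_p := by
    ext y
    simp only [after_p, mem_filter, mem_univ, true_and, hρ, Perm.mul_apply]
    exact and_congr_right fun hy => by rw [hc_gt y hy]
  have hafter_σ : ({y | q < y ∧ σ y < b} : Finset _) = Ioc q p ∪ after_p := by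
    ext y
    simp only [after_p, mem_filter, mem_univ, true_and, mem_union, mem_Ioc]
    constructor
    · rintro ⟨hqy, hy⟩
      exact (le_or_gt y p).imp (fun hyp => ⟨hqy, hyp⟩) fun hpy => ⟨hpy, hy⟩
    · rintro (⟨hqy, hyp⟩ | ⟨hpy, hy⟩)
      · exact ⟨hqy, hlt y hyp hqy.ne'⟩
      · exact ⟨hqp.trans_lt hpy, hy⟩
  have hdisj : Disjoint (Ioc q p) after_p :=
    disjoint_left.mpr fun y hy hy' => (mem_Ioc.mp hy).2.not_gt (mem_filter.mp hy').2.1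
  rw [invCount_insertPerm, invCount_insertPerm, hbefore_σ, hbefore_ρ, hafter_ρ, hafter_σ,
    card_union_of_disjoint hdisj, Fin.card_Ioc]
  simp only [card_empty, add_zero]
  omega

lemma invCount_eq_invCount_mul_cycleIcc {q p : Fin (M + 1)} (hqp : q ≤ p)
    (σ : Perm (Fin (M + 1))) (hmax : ∀ i ≤ p, σ i ≤ σ q) :
    invCount σ = invCount (σ * Fin.cycleIcc q p) + (p - q) := by
  generalize hb : σ q = b at hmax
  obtain ⟨⟨a, τ⟩, rfl⟩ := (insertPerm_bijective b).2 σ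
  obtain rfl : a = q := (insertPerm a b τ).injective ((insertPerm_apply_self a b τ).trans hb.symm)
  rw [insertPerm_mul_cycleIcc hqp]
  exact invCount_insertPerm_of_le hqp b τ hmax

lemma sum_pow_invCount (n : ℕ) (θ : ℝ) :
    ∑ σ : Perm (Fin n), θ ^ invCount σ = qfact n θ := by
  induction n with
  | zero => simp [qfact, invCount]
  | succ n ih =>
    simp_rw [sum_perm_eq_sum_insertPerm 0, invCount_insertPerm_zero, pow_add, ← sum_mul,
      ← mul_sum, ih, sum_pow_eq_tA, qfact, prod_range_succ]

lemma sum_pow_invCount_of_isMax (n : ℕ) (p : Fin (n + 1)) (θ : ℝ) :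
    ∑ σ : Perm (Fin (n + 1)) with ∀ i, σ i ≤ σ p, θ ^ invCount σ =
      θ ^ (n - p : ℕ) * qfact n θ := by
  have hmax_iff : ∀ a τ,
      (∀ i, insertPerm a (Fin.last n) τ i ≤ insertPerm a (Fin.last n) τ p) ↔ a = p := by
    intro a τ
    refine ⟨fun h => (insertPerm a (Fin.last n) τ).injective ?_, ?_⟩
    · simpa [Fin.last_le_iff, eq_comm] using h a
    · rintro rfl i
      simpa using Fin.le_last _
  rw [sum_filter, sum_perm_eq_sum_insertPerm (Fin.last n)]
  simp_rw [hmax_iff]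
  rw [Fintype.sum_eq_single p fun a ha => by simp [ha]]
  simp [invCount_insertPerm_last, pow_add, ← sum_mul, sum_pow_invCount, mul_comm]

end Inversions

section Winnable

variable {M : ℕ}

lemma isLRMax_of_forall_le {σ : Perm (Fin M)} {p : Fin M} (h : ∀ i, σ i ≤ σ p) :
    IsLRMax σ p :=
  fun i hi => (h i).lt_of_ne (σ.injective.ne hi.ne)

lemma kWinnable_succ_iff_of_not_isLRMax {σ : Perm (Fin M)} {p : Fin M} (hp : ¬ IsLRMax σ p) :
    KWinnable (p + 1) σ ↔ KWinnable p σ := by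
  constructor
  · rintro ⟨j, hj, hLR, hmax, hnone⟩
    refine ⟨j, by omega, hLR, hmax, fun i hi hij => ?_⟩
    obtain rfl | hpi := eq_or_ne i p
    · exact hp
    · exact hnone i (by omega) hij
  · rintro ⟨j, hj, hLR, hmax, hnone⟩
    have hjp : j ≠ p := by rintro rfl; exact hp hLR
    exact ⟨j, by omega, hLR, hmax, fun i hi hij => hnone i (by omega) hij⟩

lemma kWinnable_iff_of_isLRMax {σ : Perm (Fin M)} {p : Fin M} (hp : IsLRMax σ p) :
    KWinnable p σ ↔ ∀ i, σ i ≤ σ p := by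
  refine ⟨fun ⟨j, hj, _, hmax, hnone⟩ => ?_,
    fun h => ⟨p, le_rfl, hp, h, fun i hi hip => ?_⟩⟩
  · obtain rfl | hpj := eq_or_ne j p
    · exact hmax
    · exact absurd hp (hnone p le_rfl (by omega))
  · exact absurd hip (by omega)

lemma isLRMax_insertPerm_zero_succAbove (a : Fin (M + 1)) (τ : Perm (Fin M)) (i : Fin M) :
    IsLRMax (insertPerm a 0 τ) (a.succAbove i) ↔ IsLRMax τ i := by
  simp [IsLRMax, Fin.forall_iff_succAbove a, Fin.succAbove_lt_succAbove_iff]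

lemma not_isLRMax_insertPerm_zero {a : Fin (M + 1)} (ha : a ≠ 0) (τ : Perm (Fin M)) :
    ¬ IsLRMax (insertPerm a 0 τ) a := fun h => by
  simpa using h 0 (Fin.pos_iff_ne_zero.mpr ha)

lemma kWinnable_insertPerm_zero_iff {a : Fin (M + 1)} {τ : Perm (Fin M)} {k k' : ℕ} (hk : 0 < k)
    (hkk' : ∀ i : Fin M, k ≤ (a.succAbove i : ℕ) ↔ k' ≤ (i : ℕ)) :
    KWinnable k (insertPerm a 0 τ) ↔ KWinnable k' τ := by
  have ha : k ≤ (a : ℕ) → ¬ IsLRMax (insertPerm a 0 τ) a := fun h =>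
    not_isLRMax_insertPerm_zero (Fin.ne_of_val_ne (by rw [Fin.val_zero]; omega)) τ
  unfold KWinnable
  rw [Fin.exists_iff_succAbove a, or_iff_right fun ⟨h, hLR, _⟩ => ha h hLR]
  refine exists_congr fun j => ?_
  simp only [hkk', Fin.forall_iff_succAbove a, isLRMax_insertPerm_zero_succAbove,
    insertPerm_apply_self, insertPerm_apply_succAbove, Fin.succAbove_le_succAbove_iff,
    Fin.succAbove_lt_succAbove_iff, Fin.zero_le, true_and]
  exact and_congr_right' <| and_congr_right' <| and_congr_right' <|
    and_iff_right fun h _ => ha h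

lemma kWinnable_mul_of_fixed {k : ℕ} {τ c : Perm (Fin M)}
    (hc : ∀ i : Fin M, k ≤ (i : ℕ) → c i = i) :
    KWinnable k (τ * c) ↔ KWinnable k τ := by
  have hlt : ∀ x i : Fin M, k ≤ (x : ℕ) → (c i < x ↔ i < x) := by
    intro x i hx
    by_cases hi : k ≤ (i : ℕ)
    · rw [hc i hi]
    · have := (perm_apply_iff_of_fixed hc i).not.mpr hi
      simp only [Fin.lt_def]
      omega
  have hLR : ∀ x : Fin M, k ≤ (x : ℕ) → (IsLRMax (τ * c) x ↔ IsLRMax τ x) := by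
    intro x hx
    simp only [IsLRMax, Perm.mul_apply, hc x hx]
    exact c.forall_congr fun i => by rw [hlt x i hx]
  have hmax : ∀ j : Fin M, k ≤ (j : ℕ) →
      ((∀ i, (τ * c) i ≤ (τ * c) j) ↔ ∀ i, τ i ≤ τ j) := by
    intro j hj
    simp only [Perm.mul_apply, hc j hj]
    exact c.forall_congr fun i => Iff.rfl
  unfold KWinnable
  refine exists_congr fun j => and_congr_right fun hj => ?_
  rw [hLR j hj, hmax j hj]
  exact and_congr_right' <| and_congr_right' <| forall_congr' fun i =>
    forall_congr' fun hi => by rw [hLR i hi]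

lemma existsUnique_argmax_Iic {n : ℕ} (σ : Perm (Fin n)) (p : Fin n) :
    ∃! q, q ≤ p ∧ ∀ i ≤ p, σ i ≤ σ q := by
  obtain ⟨q, hq, hmax⟩ := exists_max_image (Iic p) σ ⟨p, mem_Iic.mpr le_rfl⟩
  refine ⟨q, ⟨mem_Iic.mp hq, fun i hi => hmax i (mem_Iic.mpr hi)⟩,
    fun q' ⟨hq'p, hq'⟩ => ?_⟩
  exact σ.injective (le_antisymm (hmax q' (mem_Iic.mpr hq'p)) (hq' q (mem_Iic.mp hq)))

end Winnable

section WeightedCounts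

open Classical

lemma WM_succ_succ {M k : ℕ} (hk : k ≤ M) (θ : ℝ) :
    WM (M + 1) (k + 1) θ =
      tA (M + 1) θ * WM M (k + 1) θ + tA (k + 1) θ * (WM M k θ - WM M (k + 1) θ) := by
  have hwin : ∀ (a : Fin (M + 1)) (τ : Perm (Fin M)), KWinnable (k + 1) (insertPerm a 0 τ) ↔
      KWinnable (if (a : ℕ) ≤ k then k else k + 1) τ := by
    intro a τ
    refine kWinnable_insertPerm_zero_iff k.succ_pos fun i => ?_
    rcases lt_or_ge i.castSucc a with h | h
    · rw [Fin.succAbove_of_castSucc_lt _ _ h, Fin.val_castSucc]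
      rw [Fin.lt_def, Fin.val_castSucc] at h
      split_ifs <;> omega
    · rw [Fin.succAbove_of_le_castSucc _ _ h, Fin.val_succ]
      rw [Fin.le_def, Fin.val_castSucc] at h
      split_ifs <;> omega
  have hfiber : ∀ a : Fin (M + 1),
      ∑ τ, (if KWinnable (k + 1) (insertPerm a 0 τ) then θ ^ invCount (insertPerm a 0 τ)
        else 0) =
        θ ^ (a : ℕ) * WM M (k + 1) θ +
          (if (a : ℕ) ≤ k then θ ^ (a : ℕ) else 0) * (WM M k θ - WM M (k + 1) θ) := by
    intro a
    simp only [hwin, invCount_insertPerm_zero, WM, sum_filter, mul_sum, ← sum_sub_distrib,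
      ← sum_add_distrib, ite_mul, zero_mul]
    refine sum_congr rfl fun τ _ => ?_
    split_ifs <;> ring
  rw [WM, sum_filter, sum_perm_eq_sum_insertPerm 0]
  simp only [hfiber, sum_add_distrib, ← sum_mul, sum_pow_eq_tA,
    sum_ite_le_pow_eq_tA (Nat.lt_succ_of_le hk)]

noncomputable def WMLRMax {n : ℕ} (p : Fin n) (θ : ℝ) : ℝ :=
  ∑ π ∈ univ.filter (fun π : Perm (Fin n) => KWinnable (p + 1) π ∧ IsLRMax π p),
    θ ^ invCount π

lemma WM_add_WMLRMax {n : ℕ} (p : Fin (n + 1)) (θ : ℝ) :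
    WM (n + 1) p θ + WMLRMax p θ = WM (n + 1) (p + 1) θ + θ ^ (n - p : ℕ) * qfact n θ := by
  rw [← sum_pow_invCount_of_isMax, WM, WM, WMLRMax]
  simp only [sum_filter, ← sum_add_distrib]
  refine sum_congr rfl fun σ _ => ?_
  by_cases hp : IsLRMax σ p
  · simp only [kWinnable_iff_of_isLRMax hp, hp, and_true]
    exact add_comm _ _
  · have hmax : ¬ ∀ i, σ i ≤ σ p := mt isLRMax_of_forall_le hp
    simp [kWinnable_succ_iff_of_not_isLRMax hp, hp, hmax]

lemma sum_kWinnable_argmax_eq {n : ℕ} {q p : Fin (n + 1)} (hqp : q ≤ p) (θ : ℝ) :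
    ∑ σ ∈ univ.filter (fun σ : Perm (Fin (n + 1)) =>
        KWinnable (p + 1) σ ∧ ∀ i ≤ p, σ i ≤ σ q), θ ^ invCount σ =
      θ ^ (p - q : ℕ) * WMLRMax p θ := by
  set c := Fin.cycleIcc q p
  have hc : ∀ i, p < i → c i = i := fun i => Fin.cycleIcc_of_gt
  have hc_inv : ∀ i, p < i → c⁻¹ i = i := fun i hi => Perm.inv_eq_iff_eq.mpr (hc i hi).symm
  have hc_le : ∀ i, c i ≤ p ↔ i ≤ p := fun i => not_iff_not.mp <| by
    simpa only [not_le] using perm_apply_iff_of_fixed hc i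
  have hc_inv_le : ∀ i, c⁻¹ i ≤ p ↔ i ≤ p := fun i => not_iff_not.mp <| by
    simpa only [not_le] using perm_apply_iff_of_fixed hc_inv i
  have hcp : c p = q := Fin.cycleIcc_of_last hqp
  have hwin : ∀ {d : Perm (Fin (n + 1))}, (∀ i, p < i → d i = i) →
      ∀ τ, KWinnable (p + 1) (τ * d) ↔ KWinnable (p + 1) τ := fun hd _ =>
    kWinnable_mul_of_fixed fun i hi => hd i (Fin.lt_def.mpr (by omega))
  rw [WMLRMax, mul_sum]
  refine sum_nbij' (· * c) (· * c⁻¹) ?_ ?_ (fun σ _ => by simp) (fun ρ _ => by simp) ?_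
  · intro σ hσ
    simp only [mem_filter, mem_univ, true_and] at hσ ⊢
    refine ⟨(hwin hc σ).mpr hσ.1, fun i hi => ?_⟩
    rw [Perm.mul_apply, Perm.mul_apply, hcp]
    have hci : c i ≠ q := hcp ▸ c.injective.ne hi.ne
    exact (hσ.2 _ ((hc_le i).mpr hi.le)).lt_of_ne (σ.injective.ne hci)
  · intro ρ hρ
    simp only [mem_filter, mem_univ, true_and] at hρ ⊢
    refine ⟨(hwin hc_inv ρ).mpr hρ.1, fun i hi => ?_⟩
    rw [Perm.mul_apply, Perm.mul_apply, Perm.inv_eq_iff_eq.mpr hcp.symm]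
    rcases ((hc_inv_le i).mpr hi).lt_or_eq with h | h
    · exact (hρ.2 _ h).le
    · rw [h]
  · intro σ hσ
    rw [invCount_eq_invCount_mul_cycleIcc hqp σ (mem_filter.mp hσ).2.2, pow_add, mul_comm]

lemma WM_eq_tA_mul_WMLRMax {n : ℕ} (p : Fin (n + 1)) (θ : ℝ) :
    WM (n + 1) (p + 1) θ = tA (p + 1) θ * WMLRMax p θ := by
  have hsplit : ∀ σ : Perm (Fin (n + 1)),
      (if KWinnable (p + 1) σ then θ ^ invCount σ else 0) =
        ∑ q ∈ Iic p,
          if KWinnable (p + 1) σ ∧ ∀ i ≤ p, σ i ≤ σ q then θ ^ invCount σ else 0 := by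
    intro σ
    obtain ⟨q, ⟨hqp, hq⟩, huniq⟩ := existsUnique_argmax_Iic σ p
    rw [sum_eq_single_of_mem q (mem_Iic.mpr hqp)
      fun q' hq' hne => if_neg fun h => hne (huniq q' ⟨mem_Iic.mp hq', h.2⟩)]
    simp only [and_iff_left hq]
  calc WM (n + 1) (p + 1) θ
      = ∑ q ∈ Iic p, ∑ σ ∈ univ.filter (fun σ : Perm (Fin (n + 1)) =>
          KWinnable (p + 1) σ ∧ ∀ i ≤ p, σ i ≤ σ q), θ ^ invCount σ := by
        simp only [WM, sum_filter, hsplit]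
        exact sum_comm
    _ = ∑ q ∈ Iic p, θ ^ (p - q : ℕ) * WMLRMax p θ :=
        sum_congr rfl fun q hq => sum_kWinnable_argmax_eq (mem_Iic.mp hq) θ
    _ = tA (p + 1) θ * WMLRMax p θ := by rw [← sum_mul, sum_Iic_pow_sub_eq_tA]

end WeightedCounts

/-- recurrence for the Mallows-weighted count:
`W(N,k) = θ·[N−1]_θ·W(N−1,k) + θ^{N−k−1}·[k]_θ·[N−2]_θ!` for `1 ≤ k < N`,
with `W(1,0) = 1` and `W(N,N) = 0`. -/
theorem mallows_W_recurrence :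
    (∀ N k : ℕ, ∀ θ : ℝ, 1 ≤ k → k < N →
      WM N k θ = θ * tA (N - 1) θ * WM (N - 1) k θ +
        θ ^ (N - k - 1) * tA k θ * qfact (N - 2) θ) ∧
    (∀ θ : ℝ, WM 1 0 θ = 1) ∧
    (∀ N : ℕ, ∀ θ : ℝ, WM N N θ = 0) := by
  refine ⟨fun N k θ hk hkN => ?_, fun θ => ?_, fun N θ => ?_⟩
  · obtain ⟨n, rfl⟩ : ∃ n, N = n + 2 := ⟨N - 2, by omega⟩
    obtain ⟨p, rfl⟩ : ∃ p : Fin (n + 1), k = p + 1 :=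
      ⟨⟨k - 1, by omega⟩, by simp only; omega⟩
    have hA := WM_succ_succ (M := n + 1) (by omega : (p : ℕ) ≤ n + 1) θ
    have hB := WM_add_WMLRMax p θ
    have hC := WM_eq_tA_mul_WMLRMax p θ
    have htA : tA (n + 2) θ = θ * tA (n + 1) θ + 1 := geom_sum_succ
    rw [show n + 2 - (p + 1) - 1 = n - p by omega, show n + 2 - 1 = n + 1 from rfl,
      Nat.add_sub_cancel]
    linear_combination hA + tA (p + 1) θ * hB + hC + WM (n + 1) (p + 1) θ * htA
  · classical
    rw [WM, filter_true_of_mem fun π _ => ⟨0, le_rfl, fun i hi => absurd hi (Fin.not_lt_zero i),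
      fun i => by rw [Subsingleton.elim i 0], fun i _ hi => absurd hi (Fin.not_lt_zero i)⟩,
      sum_pow_invCount]
    simp [qfact, tA]
  · classical
    rw [WM, filter_false_of_mem fun π _ ⟨j, hj, _⟩ => j.is_lt.not_ge hj, sum_empty]
end
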